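/- arXiv:1711.05069 — 2 statements merged into one kernel-verified Lean document; each statement's English description precedes it below -/
import Mathlib

section
/- Let β ∈ (0,1) and ε ∈ (0, β). Suppose (r_n)_{n≥1} are nonnegative reals with ∑_{j≥n} r_j ≤ C·n^{-β} for all n ≥ 1. Then there is a constant C' > 0 such that for all u ∈ (0,1), ∑_{n≥1} n^{1+ε}·r_n·e^{-un} ≤ C'·u^{β−ε−1}. -/
/-!
Cut `ℕ` into dyadic blocks `[2^k, 2^(k+1))`. On a block the weight `n^(1+ε) e^(-un)` is at most
`2^(1+ε) (2^k)^(1+ε) e^(-u 2^k)`, while the tail bound gives the block mass `∑ r ≤ C (2^k)^(-β)`.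
With `a = 1 + ε - β ∈ (0, 1]` and `t_k = u 2^k`, the sum is therefore at most a constant times
`u^(-a) ∑_k t_k^a e^(-t_k)`. The terms with `t_k ≤ 1` are bounded by `t_k^a`, a geometric series
dominated by its last term `≤ 1`; the terms with `t_k > 1` are bounded by `2 / t_k`, a geometric
series with first term `< 2`. Hence `∑_k t_k^a e^(-t_k)` is bounded uniformly in `u`.
-/

open Finset Real

lemma sum_range_sum_Ico_two_pow {M : Type*} [AddCommMonoid M] (g : ℕ → M) (N : ℕ) :
    ∑ k ∈ range N, ∑ m ∈ Ico (2 ^ k) (2 ^ (k + 1)), g m = ∑ m ∈ Ico 1 (2 ^ N), g m := by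
  induction N with
  | zero => simp
  | succ N ih =>
    rw [sum_range_succ, ih,
      sum_Ico_consecutive _ N.one_le_two_pow (Nat.pow_le_pow_right two_pos N.le_succ)]

lemma tsum_succ_le_of_sum_dyadic_le {g : ℕ → ℝ} (hg : ∀ n, 0 ≤ g n) {B : ℝ}
    (h : ∀ N, ∑ k ∈ range N, ∑ m ∈ Ico (2 ^ k) (2 ^ (k + 1)), g m ≤ B) :
    ∑' n, g (n + 1) ≤ B := by
  refine tsum_le_of_sum_le' ((sum_range_zero _).symm.le.trans (h 0)) fun s ↦ ?_
  obtain ⟨N, hsN⟩ := s.exists_nat_subset_range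
  calc ∑ n ∈ s, g (n + 1) ≤ ∑ n ∈ range N, g (n + 1) :=
        sum_le_sum_of_subset_of_nonneg hsN fun n _ _ ↦ hg _
    _ = ∑ m ∈ Ico 1 (N + 1), g m := by
        rw [sum_Ico_eq_sum_range, Nat.add_sub_cancel]; simp [add_comm]
    _ ≤ ∑ m ∈ Ico 1 (2 ^ N), g m :=
        sum_le_sum_of_subset_of_nonneg (Ico_subset_Ico_right N.lt_two_pow_self) fun m _ _ ↦ hg m
    _ ≤ B := (sum_range_sum_Ico_two_pow g N).ge.trans (h N)

lemma sum_Ico_le_tsum_nat_add {r : ℕ → ℝ} (hr : ∀ n, 0 ≤ r n) (hsum : Summable r) (n N : ℕ) :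
    ∑ m ∈ Ico n N, r m ≤ ∑' j, r (n + j) := by
  rw [sum_Ico_eq_sum_range]
  exact (hsum.comp_injective (add_right_injective n)).sum_le_tsum _ fun j _ ↦ hr _

lemma sum_range_succ_mul_pow_le {q c : ℝ} (hq : 1 < q) (hc : 0 ≤ c) (K : ℕ) :
    ∑ k ∈ range (K + 1), c * q ^ k ≤ q / (q - 1) * (c * q ^ K) := by
  have hq0 : 0 < q - 1 := sub_pos.2 hq
  rw [← mul_sum, geom_sum_eq hq.ne', mul_div_assoc', div_mul_eq_mul_div,
    div_le_div_iff_of_pos_right hq0, pow_succ]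
  nlinarith [pow_pos (zero_lt_one.trans hq) K]

lemma rpow_le_one_add {t a : ℝ} (ht : 0 ≤ t) (ha : 0 ≤ a) (ha1 : a ≤ 1) : t ^ a ≤ 1 + t := by
  rcases le_total t 1 with h | h
  · linarith [rpow_le_one ht h ha]
  · linarith [rpow_le_self_of_one_le h ha1]

lemma rpow_mul_exp_neg_le_two_div {t a : ℝ} (ht : 0 < t) (ha : 0 ≤ a) (ha1 : a ≤ 1) :
    t ^ a * exp (-t) ≤ 2 / t := by
  rw [exp_neg, ← div_eq_mul_inv, div_le_div_iff₀ (exp_pos t) ht]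
  nlinarith [rpow_le_one_add ht.le ha ha1, quadratic_le_exp_of_nonneg ht.le]

lemma sum_range_rpow_mul_exp_neg_two_pow_le {a u : ℝ} (ha : 0 < a) (ha1 : a ≤ 1)
    (hu : 0 < u) (hu1 : u ≤ 1) (N : ℕ) :
    ∑ k ∈ range N, (u * 2 ^ k) ^ a * exp (-(u * 2 ^ k)) ≤ 2 ^ a / (2 ^ a - 1) + 4 := by
  set f : ℕ → ℝ := fun k ↦ (u * 2 ^ k) ^ a * exp (-(u * 2 ^ k))
  obtain ⟨K, hK, hK1⟩ := exists_nat_pow_near (one_le_inv_iff₀.2 ⟨hu, hu1⟩) one_lt_two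
  have head : ∑ k ∈ range (K + 1), f k ≤ 2 ^ a / (2 ^ a - 1) := by
    have hpow (k : ℕ) : (u * 2 ^ k) ^ a = u ^ a * ((2 : ℝ) ^ a) ^ k := by
      rw [mul_rpow hu.le (by positivity), rpow_pow_comm zero_le_two]
    calc ∑ k ∈ range (K + 1), f k ≤ ∑ k ∈ range (K + 1), u ^ a * ((2 : ℝ) ^ a) ^ k :=
          sum_le_sum fun k _ ↦ (hpow k) ▸ mul_le_of_le_one_right (by positivity)
            (exp_le_one_iff.2 (by simp only [neg_nonpos]; positivity))
      _ ≤ 2 ^ a / (2 ^ a - 1) * (u * 2 ^ K) ^ a := by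
          rw [hpow]; exact sum_range_succ_mul_pow_le (one_lt_rpow one_lt_two ha) (by positivity) K
      _ ≤ 2 ^ a / (2 ^ a - 1) := by
          refine mul_le_of_le_one_right ?_ (rpow_le_one (by positivity) ?_ ha.le)
          · exact div_nonneg (by positivity) (sub_nonneg.2 (one_le_rpow one_le_two ha.le))
          · simpa [mul_inv_cancel₀ hu.ne'] using mul_le_mul_of_nonneg_left hK hu.le
  have tail : ∑ j ∈ range N, f (K + 1 + j) ≤ 4 := by
    have hK1' : 1 < u * 2 ^ (K + 1) := by
      simpa [mul_inv_cancel₀ hu.ne'] using mul_lt_mul_of_pos_left hK1 hu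
    calc ∑ j ∈ range N, f (K + 1 + j) ≤ ∑ j ∈ range N, 2 * (1 / 2 : ℝ) ^ j := by
          refine sum_le_sum fun j _ ↦
            (rpow_mul_exp_neg_le_two_div (by positivity) ha.le ha1).trans ?_
          calc 2 / (u * 2 ^ (K + 1 + j)) = 2 / (u * 2 ^ (K + 1) * 2 ^ j) := by
                rw [pow_add, mul_assoc]
            _ ≤ 2 / (1 * 2 ^ j) := by gcongr
            _ = 2 * (1 / 2) ^ j := by rw [one_div_pow, mul_one_div, one_mul]
      _ ≤ 4 := by rw [← mul_sum]; linarith [sum_geometric_two_le N]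
  calc ∑ k ∈ range N, f k ≤ ∑ k ∈ range (K + 1 + N), f k :=
        sum_le_sum_of_subset_of_nonneg (range_subset_range.2 (Nat.le_add_left N _))
          fun k _ _ ↦ by positivity
    _ = ∑ k ∈ range (K + 1), f k + ∑ j ∈ range N, f (K + 1 + j) := sum_range_add f _ _
    _ ≤ 2 ^ a / (2 ^ a - 1) + 4 := add_le_add head tail

lemma sum_Ico_two_pow_rpow_mul_exp_le {γ β C u : ℝ} (hγ : 0 ≤ γ) (hu : 0 < u) {r : ℕ → ℝ}
    (hr : ∀ n, 0 ≤ r n) (k : ℕ)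
    (hblock : ∑ m ∈ Ico (2 ^ k) (2 ^ (k + 1)), r m ≤ C * (2 ^ k : ℝ) ^ (-β)) :
    ∑ m ∈ Ico (2 ^ k : ℕ) (2 ^ (k + 1)), (m : ℝ) ^ γ * r m * exp (-u * m) ≤
      C * 2 ^ γ * u ^ (β - γ) * ((u * 2 ^ k) ^ (γ - β) * exp (-(u * 2 ^ k))) := by
  set B : ℝ := 2 ^ γ * ((2 : ℝ) ^ k) ^ γ * exp (-(u * 2 ^ k))
  have hweight : ∀ m ∈ Ico (2 ^ k : ℕ) (2 ^ (k + 1)), (m : ℝ) ^ γ * exp (-u * m) ≤ B := by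
    intro m hm
    obtain ⟨hkm, hmk⟩ := mem_Ico.1 hm
    have hkm' : (2 : ℝ) ^ k ≤ m := by exact_mod_cast hkm
    have hmk' : (m : ℝ) ≤ 2 ^ (k + 1) := by exact_mod_cast hmk.le
    have hpow : ((2 : ℝ) ^ (k + 1)) ^ γ = 2 ^ γ * ((2 : ℝ) ^ k) ^ γ := by
      rw [pow_succ, mul_rpow (by positivity) zero_le_two, mul_comm]
    exact mul_le_mul (hpow ▸ rpow_le_rpow (by positivity) hmk' hγ)
      (exp_le_exp.2 (by nlinarith)) (exp_pos _).le (by positivity)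
  have hsplit : u ^ (β - γ) * (u * 2 ^ k) ^ (γ - β) =
      ((2 : ℝ) ^ k) ^ γ * ((2 : ℝ) ^ k) ^ (-β) := by
    rw [mul_rpow hu.le (by positivity), ← mul_assoc, ← rpow_add hu, ← rpow_add (by positivity)]
    simp [← sub_eq_add_neg]
  calc ∑ m ∈ Ico (2 ^ k : ℕ) (2 ^ (k + 1)), (m : ℝ) ^ γ * r m * exp (-u * m)
      = ∑ m ∈ Ico (2 ^ k : ℕ) (2 ^ (k + 1)), (m : ℝ) ^ γ * exp (-u * m) * r m :=
        sum_congr rfl fun m _ ↦ by ring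
    _ ≤ ∑ m ∈ Ico (2 ^ k : ℕ) (2 ^ (k + 1)), B * r m :=
        sum_le_sum fun m hm ↦ mul_le_mul_of_nonneg_right (hweight m hm) (hr m)
    _ ≤ B * (C * (2 ^ k : ℝ) ^ (-β)) := by
        rw [← mul_sum]; exact mul_le_mul_of_nonneg_left hblock (by positivity)
    _ = C * 2 ^ γ * (((2 : ℝ) ^ k) ^ γ * ((2 : ℝ) ^ k) ^ (-β)) * exp (-(u * 2 ^ k)) := by ring
    _ = C * 2 ^ γ * u ^ (β - γ) * ((u * 2 ^ k) ^ (γ - β) * exp (-(u * 2 ^ k))) := by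
        rw [← hsplit]; ring

theorem stmt3 (β ε C : ℝ) (hβ : β ∈ Set.Ioo (0:ℝ) 1) (hε : ε ∈ Set.Ioo 0 β) (hC : 0 < C)
    (r : ℕ → ℝ) (hr : ∀ n, 0 ≤ r n) (hsum : Summable r)
    (htail : ∀ n : ℕ, 1 ≤ n → (∑' j : ℕ, r (n + j)) ≤ C * (n : ℝ) ^ (-β)) :
    ∃ C' > 0, ∀ u : ℝ, 0 < u → u < 1 →
      (∑' n : ℕ, ((n + 1 : ℕ) : ℝ) ^ (1 + ε) * r (n + 1) * Real.exp (-u * (n + 1))) ≤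
        C' * u ^ (β - ε - 1) := by
  obtain ⟨-, hβ1⟩ := hβ
  obtain ⟨hε0, hεβ⟩ := hε
  have ha : 0 < 1 + ε - β := by linarith
  set D : ℝ := 2 ^ (1 + ε - β) / (2 ^ (1 + ε - β) - 1) + 4
  have hD : 0 < D :=
    add_pos (div_pos (by positivity) (sub_pos.2 (one_lt_rpow one_lt_two ha))) four_pos
  refine ⟨C * 2 ^ (1 + ε) * D, by positivity, fun u hu hu1 ↦ ?_⟩
  set g : ℕ → ℝ := fun m ↦ (m : ℝ) ^ (1 + ε) * r m * exp (-u * m)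
  have hg (m : ℕ) : 0 ≤ g m := mul_nonneg (mul_nonneg (by positivity) (hr m)) (exp_nonneg _)
  have hblock (k : ℕ) : ∑ m ∈ Ico (2 ^ k) (2 ^ (k + 1)), r m ≤ C * (2 ^ k : ℝ) ^ (-β) := by
    exact_mod_cast (sum_Ico_le_tsum_nat_add hr hsum _ _).trans (htail _ Nat.one_le_two_pow)
  rw [show β - ε - 1 = β - (1 + ε) by ring]
  calc _ = ∑' n, g (n + 1) := by simp [g]
    _ ≤ _ := tsum_succ_le_of_sum_dyadic_le hg fun N ↦ ?_
  calc ∑ k ∈ range N, ∑ m ∈ Ico (2 ^ k) (2 ^ (k + 1)), g m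
      ≤ ∑ k ∈ range N, C * 2 ^ (1 + ε) * u ^ (β - (1 + ε)) *
          ((u * 2 ^ k) ^ (1 + ε - β) * exp (-(u * 2 ^ k))) :=
        sum_le_sum fun k _ ↦ sum_Ico_two_pow_rpow_mul_exp_le (by positivity) hu hr k (hblock k)
    _ ≤ C * 2 ^ (1 + ε) * u ^ (β - (1 + ε)) * D := by
        rw [← mul_sum]
        exact mul_le_mul_of_nonneg_left
          (sum_range_rpow_mul_exp_neg_two_pow_le ha (by linarith) hu hu1.le N) (by positivity)
    _ = C * 2 ^ (1 + ε) * D * u ^ (β - (1 + ε)) := by ring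
end

section
/- For the Stratmann–Vogt map T at λ = 1/2, with return domains of the first return map to V_1 having exactly C_n (the n-th Catalan number) branches of return time n, each of length 2|V_1|/4^{n}, the normalized Lebesgue measure μ on V_1 satisfies μ(ρ > n) = c_1·n^{-1/2} + c_2·n^{-3/2} + O(n^{-5/2}) for some constants c_1 > 0 and c_2 ∈ ℝ. -/
/-!
With `w k = (2k choose k) / 4 ^ k`, the identity `(k + 1) C_k = (2k choose k)` gives
`2 C_k 4^(-k) = 4 (w k - w (k + 1))`, so the tail sum telescopes to `4 w (n + 1)`.

Wallis' product is `((2k + 1) w k ^ 2)⁻¹`, hence `π (k + 1/4) w k ^ 2 → 1`. This sequence increases,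
while `π (k + 1) ^ 2 / (k + 3/4) · w (k + 1) ^ 2` decreases and dominates it, so both are squeezed
against their common limit `1`:
`(4k + 3) / (4 (k + 1) ^ 2) ≤ π w (k + 1) ^ 2 ≤ 4 / (4k + 5)`.
Both bounds agree with `(n^(-1/2) - 5/8 n^(-3/2)) ^ 2` up to `O(n^(-3))`, which pins
`√π w (n + 1)` down to `O(n^(-5/2))` and gives `c₁ = 4 / √π`, `c₂ = -5 / (2 √π)`.
-/

open Real Filter Topology

lemma abs_sub_le_of_sq_le_sq_add {a t ε : ℝ} (ha : 0 ≤ a) (ht : 0 < t) (h₁ : t ^ 2 ≤ a ^ 2)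
    (h₂ : a ^ 2 ≤ t ^ 2 + ε) : |a - t| ≤ ε / (2 * t) := by
  have hta : t ≤ a := (pow_le_pow_iff_left₀ ht.le ha two_ne_zero).1 h₁
  rw [abs_of_nonneg (sub_nonneg.2 hta), le_div_iff₀ (by positivity)]
  nlinarith

lemma abs_sub_rpow_expansion_le {y a : ℝ} (hy : 1 ≤ y) (ha : 0 ≤ a)
    (hlo : (4 * y + 3) / (4 * (y + 1) ^ 2) ≤ a ^ 2) (hhi : a ^ 2 ≤ 4 / (4 * y + 5)) :
    |a - (y ^ (-(1 / 2) : ℝ) - 5 / 8 * y ^ (-(3 / 2) : ℝ))| ≤ 25 / 16 * y ^ (-(5 / 2) : ℝ) := by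
  have hy0 : 0 < y := by linarith
  set x := y ^ (-(1 / 2) : ℝ) with hx
  have hpow (k : ℕ) : y ^ (-(k / 2) : ℝ) = x ^ k := by
    rw [hx, ← rpow_mul_natCast hy0.le]; ring_nf
  have hx0 : 0 < x := rpow_pos_of_pos hy0 _
  have hx2 : x ^ 2 = y⁻¹ := by rw [← hpow 2, ← rpow_neg_one]; norm_num
  have hx1 : x ^ 2 ≤ 1 := by rw [hx2]; exact inv_le_one_of_one_le₀ hy
  rw [show (-(3 / 2) : ℝ) = -((3 : ℕ) / 2) by norm_num, show (-(5 / 2) : ℝ) = -((5 : ℕ) / 2) by norm_num,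
    hpow, hpow]
  have ht0 : 3 / 8 * x ≤ x - 5 / 8 * x ^ 3 := by nlinarith
  have ht2 : (x - 5 / 8 * x ^ 3) ^ 2 = (8 * y - 5) ^ 2 / (64 * y ^ 3) := by
    rw [show (x - 5 / 8 * x ^ 3) ^ 2 = x ^ 2 * (1 - 5 / 8 * x ^ 2) ^ 2 by ring, hx2]
    field_simp
    ring
  have hx6 : 75 / 64 * x ^ 6 = 75 / (64 * y ^ 3) := by
    rw [show x ^ 6 = (x ^ 2) ^ 3 by ring, hx2]; field_simp
  have h₁ : (x - 5 / 8 * x ^ 3) ^ 2 ≤ a ^ 2 := by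
    refine le_trans ?_ hlo
    rw [ht2, div_le_div_iff₀ (by positivity) (by positivity)]
    nlinarith
  have h₂ : a ^ 2 ≤ (x - 5 / 8 * x ^ 3) ^ 2 + 75 / 64 * x ^ 6 := by
    refine hhi.trans ?_
    rw [ht2, hx6, ← add_div, div_le_div_iff₀ (by positivity) (by positivity)]
    nlinarith
  calc _ ≤ 75 / 64 * x ^ 6 / (2 * (x - 5 / 8 * x ^ 3)) :=
        abs_sub_le_of_sq_le_sq_add ha (by linarith) h₁ h₂
    _ ≤ 75 / 64 * x ^ 6 / (2 * (3 / 8 * x)) := by gcongr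
    _ = 25 / 16 * x ^ 5 := by field_simp; ring

lemma hasSum_sub_succ_of_antitone {f : ℕ → ℝ} (hf : Antitone f) (hf0 : Tendsto f atTop (𝓝 0)) :
    HasSum (fun k => f k - f (k + 1)) (f 0) := by
  rw [hasSum_iff_tendsto_nat_of_nonneg (fun k => sub_nonneg.2 (hf k.le_succ))]
  simp_rw [Finset.sum_range_sub']
  simpa using hf0.const_sub (f 0)

noncomputable def centralBinomDivFourPow (k : ℕ) : ℝ := (k.centralBinom : ℝ) / 4 ^ k

namespace centralBinomDivFourPow

local notation "w" => centralBinomDivFourPow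

lemma pos (k : ℕ) : 0 < w k := by
  unfold centralBinomDivFourPow
  have := k.centralBinom_pos
  positivity

lemma succ (k : ℕ) : w (k + 1) = w k * ((2 * k + 1) / (2 * k + 2)) := by
  have h : ((k : ℝ) + 1) * (k + 1).centralBinom = 2 * (2 * k + 1) * k.centralBinom := by
    exact_mod_cast Nat.succ_mul_centralBinom_succ k
  unfold centralBinomDivFourPow
  rw [pow_succ]
  field_simp
  linear_combination 2 * h

lemma antitone : Antitone w :=
  antitone_nat_of_succ_le fun k => by
    rw [succ]
    exact mul_le_of_le_one_right (pos k).le (by rw [div_le_one (by positivity)]; linarith)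

lemma two_mul_catalan_mul_inv_four_pow (k : ℕ) :
    2 * (catalan k : ℝ) * (4 : ℝ)⁻¹ ^ k = 4 * (w k - w (k + 1)) := by
  have h : ((k : ℝ) + 1) * catalan k = k.centralBinom := by
    exact_mod_cast succ_mul_catalan_eq_centralBinom k
  rw [succ]
  unfold centralBinomDivFourPow
  rw [inv_pow]
  field_simp
  linear_combination 4 * h

lemma wallis_W_eq (k : ℕ) : Real.Wallis.W k = ((2 * k + 1) * w k ^ 2)⁻¹ := by
  induction k with
  | zero => simp [Real.Wallis.W, centralBinomDivFourPow]
  | succ k ih =>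
    rw [Real.Wallis.W_succ, ih, succ]
    have := pos k
    push_cast
    field_simp
    ring

lemma tendsto_pi_mul_add_quarter_mul_sq :
    Tendsto (fun k : ℕ => π * (k + 1 / 4) * w k ^ 2) atTop (𝓝 1) := by
  have hW : Tendsto (fun k => π / 2 * (Real.Wallis.W k)⁻¹) atTop (𝓝 1) := by
    have h := Real.Wallis.tendsto_W_nhds_pi_div_two.inv₀ (by positivity) |>.const_mul (π / 2)
    rwa [mul_inv_cancel₀ (by positivity)] at h
  have hq : Tendsto (fun k : ℕ => (1 + 4 * k : ℝ) / (2 + 4 * k)) atTop (𝓝 1) := by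
    simpa using tendsto_add_mul_div_add_mul_atTop_nhds (1 : ℝ) 2 4 four_ne_zero
  refine (one_mul (1 : ℝ) ▸ hW.mul hq).congr fun k => ?_
  rw [wallis_W_eq, inv_inv]
  field_simp
  ring

lemma monotone_pi_mul_add_quarter_mul_sq : Monotone fun k : ℕ => π * (k + 1 / 4) * w k ^ 2 := by
  refine monotone_nat_of_le_succ fun k => ?_
  have hr : (k + 1 / 4 : ℝ) ≤ (k + 1 + 1 / 4) * ((2 * k + 1) / (2 * k + 2)) ^ 2 := by
    rw [div_pow, ← mul_div_assoc, le_div_iff₀ (by positivity)]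
    nlinarith
  push_cast
  calc π * (k + 1 / 4) * w k ^ 2 = π * w k ^ 2 * (k + 1 / 4) := by ring
    _ ≤ π * w k ^ 2 * ((k + 1 + 1 / 4) * ((2 * k + 1) / (2 * k + 2)) ^ 2) := by gcongr
    _ = π * (k + 1 + 1 / 4) * w (k + 1) ^ 2 := by rw [succ]; ring

lemma antitone_pi_mul_succ_sq_div_mul_sq_succ : Antitone fun j : ℕ =>
    π * ((j + 1) ^ 2 / (j + 3 / 4)) * w (j + 1) ^ 2 := by
  refine antitone_nat_of_succ_le fun j => ?_
  have hr : ((j + 1 + 1) ^ 2 / (j + 1 + 3 / 4)) * ((2 * (j + 1) + 1) / (2 * (j + 1) + 2)) ^ 2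
      ≤ ((j + 1) ^ 2 / (j + 3 / 4) : ℝ) := by
    rw [div_pow, div_mul_div_comm, div_le_div_iff₀ (by positivity) (by positivity)]
    nlinarith
  push_cast
  calc π * ((j + 1 + 1) ^ 2 / (j + 1 + 3 / 4)) * w (j + 1 + 1) ^ 2
      = π * w (j + 1) ^ 2 *
          (((j + 1 + 1) ^ 2 / (j + 1 + 3 / 4)) * ((2 * (j + 1) + 1) / (2 * (j + 1) + 2)) ^ 2) := by
        rw [succ (j + 1)]; push_cast; ring
    _ ≤ π * w (j + 1) ^ 2 * ((j + 1) ^ 2 / (j + 3 / 4)) := by gcongr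
    _ = π * ((j + 1) ^ 2 / (j + 3 / 4)) * w (j + 1) ^ 2 := by ring

lemma pi_mul_sq_le (k : ℕ) : π * w k ^ 2 ≤ 4 / (4 * k + 1) := by
  have h := monotone_pi_mul_add_quarter_mul_sq.ge_of_tendsto tendsto_pi_mul_add_quarter_mul_sq k
  rw [le_div_iff₀ (by positivity)]
  linarith

lemma le_pi_mul_sq (j : ℕ) : (4 * j + 3) / (4 * (j + 1) ^ 2) ≤ π * w (j + 1) ^ 2 := by
  have h : 1 ≤ π * ((j + 1) ^ 2 / (j + 3 / 4)) * w (j + 1) ^ 2 := by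
    refine le_of_tendsto (tendsto_pi_mul_add_quarter_mul_sq.comp (tendsto_add_atTop_nat 1)) ?_
    filter_upwards [eventually_ge_atTop j] with J hJ
    refine le_trans ?_ (antitone_pi_mul_succ_sq_div_mul_sq_succ hJ)
    have hJ : (J + 1 + 1 / 4 : ℝ) ≤ (J + 1) ^ 2 / (J + 3 / 4) := by
      rw [le_div_iff₀ (by positivity)]
      nlinarith
    simp only [Function.comp_apply, Nat.cast_add, Nat.cast_one]
    gcongr
  calc (4 * j + 3 : ℝ) / (4 * (j + 1) ^ 2) = (j + 3 / 4) / (j + 1) ^ 2 * 1 := by field_simp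
    _ ≤ (j + 3 / 4 : ℝ) / (j + 1) ^ 2 * (π * ((j + 1) ^ 2 / (j + 3 / 4)) * w (j + 1) ^ 2) := by gcongr
    _ = π * w (j + 1) ^ 2 := by field_simp

lemma tendsto_nhds_zero : Tendsto w atTop (𝓝 0) := by
  have hsq : Tendsto (fun k : ℕ => w k ^ 2) atTop (𝓝 0) := by
    refine squeeze_zero (fun k => sq_nonneg _) (fun k => ?_)
      (by simpa using tendsto_one_div_add_atTop_nhds_zero_nat.const_mul (4 / π))
    have h := pi_mul_sq_le k
    rw [le_div_iff₀ (by positivity)] at h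
    rw [← div_eq_mul_inv, div_div, le_div_iff₀ (by positivity)]
    nlinarith [sq_nonneg (w k), pi_pos]
  simpa [Real.sqrt_sq (pos _).le] using hsq.sqrt

lemma tsum_two_mul_catalan_mul_inv_four_pow (m : ℕ) :
    ∑' k : ℕ, 2 * (catalan (m + k) : ℝ) * (4 : ℝ)⁻¹ ^ (m + k) = 4 * w m := by
  have h := (hasSum_sub_succ_of_antitone (f := fun k => w (m + k))
    (antitone.comp_monotone fun _ _ h => Nat.add_le_add_left h m)
    (tendsto_nhds_zero.comp (tendsto_atTop_mono (fun k => Nat.le_add_left k m) tendsto_id))).mul_left 4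
  simp only [add_zero] at h
  refine HasSum.tsum_eq ?_
  simpa only [two_mul_catalan_mul_inv_four_pow, add_assoc] using h

end centralBinomDivFourPow

theorem stmt12 :
    ∃ c₂ : ℝ, ∃ C > 0, ∃ N : ℕ, ∀ n : ℕ, N ≤ n →
      |(∑' k : ℕ, 2 * (catalan (n + 1 + k) : ℝ) * (4 : ℝ)⁻¹ ^ (n + 1 + k)) -
          (4 / Real.sqrt Real.pi * (n : ℝ) ^ (-(1/2) : ℝ) +
            c₂ * (n : ℝ) ^ (-(3/2) : ℝ))| ≤
        C * (n : ℝ) ^ (-(5/2) : ℝ) := by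
  refine ⟨-5 / (2 * √π), 25 / (4 * √π), by positivity, 1, fun n hn => ?_⟩
  set w := centralBinomDivFourPow (n + 1)
  have hπ : 0 < √π := sqrt_pos.2 pi_pos
  have hexp := abs_sub_rpow_expansion_le (y := n) (a := √π * w) (by exact_mod_cast hn)
    (mul_nonneg hπ.le (centralBinomDivFourPow.pos _).le)
    (by rw [mul_pow, sq_sqrt pi_pos.le]; exact_mod_cast centralBinomDivFourPow.le_pi_mul_sq n)
    (by
      rw [mul_pow, sq_sqrt pi_pos.le]
      convert centralBinomDivFourPow.pi_mul_sq_le (n + 1) using 2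
      push_cast; ring)
  have hsplit : 4 * w - (4 / √π * (n : ℝ) ^ (-(1 / 2) : ℝ) + -5 / (2 * √π) * (n : ℝ) ^ (-(3 / 2) : ℝ))
      = 4 / √π * (√π * w - ((n : ℝ) ^ (-(1 / 2) : ℝ) - 5 / 8 * (n : ℝ) ^ (-(3 / 2) : ℝ))) := by
    field_simp
    ring
  rw [centralBinomDivFourPow.tsum_two_mul_catalan_mul_inv_four_pow, hsplit, abs_mul,
    abs_of_pos (by positivity)]
  calc _ ≤ 4 / √π * (25 / 16 * (n : ℝ) ^ (-(5 / 2) : ℝ)) := by gcongr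
    _ = 25 / (4 * √π) * (n : ℝ) ^ (-(5 / 2) : ℝ) := by ring
end
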